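/- Let [b1, ..., bk] be a list of integers with each bi ≥ 2, and write hj([b1,...,bk]) = m/n in lowest terms. Then the reversed list satisfies hj([bk, ..., b1]) = m/n' for some positive integer n' < m with n·n' ≡ 1 (mod m). -/

import Mathlib

/-!
The matrix `M b = !![b, -1; 1, 0]` acts on `ℚ` by the Möbius map `x ↦ b - 1 / x`, so the first
column `(p, q)` of `M b₁ * ⋯ * M bₖ` satisfies `hj [b₁, …, bₖ] = p / q`. Entries `≥ 2` keep
`0 ≤ q < p` along the product, and `det = 1` makes `p / q` a fraction in lowest terms.
Since `D * M b = (M b)ᵀ * D` for `D = diag(1, -1)`, the product for the reversed list is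
`D * (M b₁ * ⋯ * M bₖ)ᵀ * D`, whose first column is `(p, r)` with `-r` the top-right entry of the
original product. Expanding `det = 1` then reads `q * r ≡ 1 (mod p)`.
-/

def hj : List ℤ → ℚ
  | [] => 0
  | b :: l => (b : ℚ) - 1 / hj l

open Matrix

def hjMatrix (b : ℤ) : Matrix (Fin 2) (Fin 2) ℤ := !![b, -1; 1, 0]

def hjProd (l : List ℤ) : Matrix (Fin 2) (Fin 2) ℤ := (l.map hjMatrix).prod

lemma hjProd_cons (b : ℤ) (l : List ℤ) : hjProd (b :: l) = hjMatrix b * hjProd l := by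
  simp [hjProd]

lemma hjProd_cons_zero_zero (b : ℤ) (l : List ℤ) :
    hjProd (b :: l) 0 0 = b * hjProd l 0 0 - hjProd l 1 0 := by
  simp [hjProd_cons, hjMatrix, mul_apply, Fin.sum_univ_two, sub_eq_add_neg]

lemma hjProd_cons_one_zero (b : ℤ) (l : List ℤ) : hjProd (b :: l) 1 0 = hjProd l 0 0 := by
  simp [hjProd_cons, hjMatrix, mul_apply, Fin.sum_univ_two]

lemma det_hjProd (l : List ℤ) : (hjProd l).det = 1 := by
  induction l with
  | nil => simp [hjProd]
  | cons b l ih => rw [hjProd_cons, det_mul, ih, hjMatrix, det_fin_two_of]; ring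

def hjSign : Matrix (Fin 2) (Fin 2) ℤ := diagonal ![1, -1]

lemma hjSign_mul_self : hjSign * hjSign = 1 := by
  simp [hjSign, ← diagonal_one, diagonal_mul_diagonal]

lemma hjSign_mul_hjMatrix (b : ℤ) : hjSign * hjMatrix b = (hjMatrix b)ᵀ * hjSign := by
  ext i j; fin_cases i <;> fin_cases j <;> simp [hjSign, hjMatrix]

lemma hjProd_reverse (l : List ℤ) : hjProd l.reverse = hjSign * (hjProd l)ᵀ * hjSign := by
  induction l with
  | nil => simp [hjProd, hjSign_mul_self]
  | cons b l ih =>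
    rw [List.reverse_cons, hjProd, List.map_append, List.prod_append, ← hjProd, ih, hjProd_cons]
    simp [Matrix.mul_assoc, hjSign_mul_hjMatrix]

lemma hjProd_reverse_zero_zero (l : List ℤ) : hjProd l.reverse 0 0 = hjProd l 0 0 := by
  simp [hjProd_reverse, hjSign, mul_apply, Fin.sum_univ_two]

lemma hjProd_reverse_one_zero (l : List ℤ) : hjProd l.reverse 1 0 = -hjProd l 0 1 := by
  simp [hjProd_reverse, hjSign, mul_apply, Fin.sum_univ_two]

lemma hjProd_one_zero_nonneg_and_lt {l : List ℤ} (hall : ∀ b ∈ l, 2 ≤ b) :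
    0 ≤ hjProd l 1 0 ∧ hjProd l 1 0 < hjProd l 0 0 := by
  induction l with
  | nil => simp [hjProd]
  | cons b l ih =>
    obtain ⟨hb, hall⟩ := List.forall_mem_cons.mp hall
    obtain ⟨hq, hqp⟩ := ih hall
    rw [hjProd_cons_zero_zero, hjProd_cons_one_zero]
    constructor <;> nlinarith

lemma hjProd_one_zero_pos {l : List ℤ} (hne : l ≠ []) (hall : ∀ b ∈ l, 2 ≤ b) :
    0 < hjProd l 1 0 := by
  obtain ⟨b, l, rfl⟩ := List.exists_cons_of_ne_nil hne
  obtain ⟨hq, hqp⟩ := hjProd_one_zero_nonneg_and_lt (List.forall_mem_cons.mp hall).2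
  rw [hjProd_cons_one_zero]
  omega

lemma hj_eq_div {l : List ℤ} (hall : ∀ b ∈ l, 2 ≤ b) :
    hj l = (hjProd l 0 0 : ℚ) / (hjProd l 1 0 : ℚ) := by
  induction l with
  | nil => simp [hj, hjProd] -- `hj [] = 0 = 1 / 0` in `ℚ`
  | cons b l ih =>
    replace hall := (List.forall_mem_cons.mp hall).2
    obtain ⟨hq, hqp⟩ := hjProd_one_zero_nonneg_and_lt hall
    have hp : (hjProd l 0 0 : ℚ) ≠ 0 := by exact_mod_cast (by omega : hjProd l 0 0 ≠ 0)
    rw [hj, ih hall, hjProd_cons_zero_zero, hjProd_cons_one_zero, one_div_div]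
    push_cast
    field_simp

theorem hj_reverse_general (l : List ℤ) (hne : l ≠ []) (hall : ∀ b ∈ l, 2 ≤ b)
    (m n : ℕ) (hn : 0 < n) (hcop : Nat.Coprime m n)
    (hhj : hj l = (m : ℚ) / (n : ℚ)) :
    ∃ n' : ℕ, 0 < n' ∧ n' < m ∧ hj l.reverse = (m : ℚ) / (n' : ℚ) ∧
      n * n' ≡ 1 [MOD m] := by
  have hdet : hjProd l 0 0 * hjProd l 1 1 - hjProd l 0 1 * hjProd l 1 0 = 1 := by
    rw [← det_fin_two]; exact det_hjProd l
  have hcopP : IsCoprime (hjProd l 0 0) (hjProd l 1 0) :=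
    ⟨hjProd l 1 1, -hjProd l 0 1, by linarith⟩
  obtain ⟨hpm, hqn⟩ : hjProd l 0 0 = m ∧ hjProd l 1 0 = n :=
    Rat.div_int_inj (hjProd_one_zero_pos hne hall) (by exact_mod_cast hn)
      (Int.isCoprime_iff_nat_coprime.mp hcopP) hcop
      (by rw [← hj_eq_div hall, hhj, Int.cast_natCast, Int.cast_natCast])
  have hall' : ∀ b ∈ l.reverse, 2 ≤ b := by simpa using hall
  have hr := hjProd_one_zero_pos (List.reverse_ne_nil_iff.mpr hne) hall'
  obtain ⟨-, hrp⟩ := hjProd_one_zero_nonneg_and_lt hall'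
  rw [hjProd_reverse_one_zero] at hr hrp
  rw [hjProd_reverse_zero_zero, hpm] at hrp
  lift -hjProd l 0 1 to ℕ using hr.le with r hr'
  refine ⟨r, by omega, by omega, ?_, ?_⟩
  · rw [hj_eq_div hall', hjProd_reverse_zero_zero, hjProd_reverse_one_zero, hpm, ← hr',
      Int.cast_natCast, Int.cast_natCast]
  · rw [Nat.modEq_iff_dvd]
    exact ⟨hjProd l 1 1, by push_cast; rw [← hpm, ← hqn, hr']; linear_combination -hdet⟩

/-- The numerator of a HJ continued fraction is invariant under list reversal,
and the denominators are inverse mod the numerator. -/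
theorem hj_reverse (l : List ℤ) (hne : l ≠ []) (hall : ∀ b ∈ l, 2 ≤ b)
    (m n : ℕ) (hm : 0 < m) (hn : 0 < n) (hcop : Nat.Coprime m n)
    (hhj : hj l = (m : ℚ) / (n : ℚ)) :
    ∃ n' : ℕ, 0 < n' ∧ n' < m ∧ hj l.reverse = (m : ℚ) / (n' : ℚ) ∧
      n * n' ≡ 1 [MOD m] :=
  hj_reverse_general l hne hall m n hn hcop hhj
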